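/- arXiv:2102.03486 — 2 statements merged into one kernel-verified Lean document; each statement's English description precedes it below -/
import Mathlib

section
/- For all positive integers n and k, F^d_k(n) = G°_k(n) − G°_k(n − k), and for every odd positive integer k, F°_k(n) = G°_k(n) + G°_k(n − k); here F^d_k counts overlined parts equal to k in (r,s)-colored overpartitions, F°_k counts odd parts equal to k in (r,s)-colored odd-overlined partitions, and G°_k counts odd colored parts repeated at least k times in (r,s)-colored odd-overlined partitions, with G°_k(m) = 0 for m ≤ 0. -/
/-- An `(r,s)`-colored overpartition of `n`: a pair `(μ, ν)` where `μ` is a multiset of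
pairs `(j, c)` with `j` a positive integer and `c ∈ {1, …, r}` (the ordinary parts), `ν` is
a multiset of pairs `(j, c)` with `j` a positive integer and `c ∈ {1, …, s}` in which every
pair occurs at most once (the overlined parts), and the sum of all first coordinates of `μ`
and `ν`, counted with multiplicity, is `n`. -/
def IsColoredOverpartition (r s n : ℕ) (P : Multiset (ℕ × ℕ) × Multiset (ℕ × ℕ)) : Prop :=
  (∀ p ∈ P.1, 0 < p.1 ∧ 1 ≤ p.2 ∧ p.2 ≤ r) ∧
  (∀ p ∈ P.2, 0 < p.1 ∧ 1 ≤ p.2 ∧ p.2 ≤ s) ∧ P.2.Nodup ∧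
  (P.1.map Prod.fst).sum + (P.2.map Prod.fst).sum = n

/-- An `(r,s)`-colored odd-overlined partition of `n`: a pair `(μ, ω)` where `μ` is a
multiset of pairs `(j, c)` with `j` a positive integer and `c ∈ {1, …, r}`, `ω` is a
multiset of pairs `(j, c)` with `j` an odd positive integer and `c ∈ {1, …, s}`, and the
sum of all first coordinates of `μ` and `ω`, counted with multiplicity, is `n`. -/
def IsColoredOddOverlined (r s n : ℕ) (P : Multiset (ℕ × ℕ) × Multiset (ℕ × ℕ)) : Prop :=
  (∀ p ∈ P.1, 0 < p.1 ∧ 1 ≤ p.2 ∧ p.2 ≤ r) ∧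
  (∀ p ∈ P.2, Odd p.1 ∧ 1 ≤ p.2 ∧ p.2 ≤ s) ∧
  (P.1.map Prod.fst).sum + (P.2.map Prod.fst).sum = n

/-- `F^d k n`: the total number of overlined parts with first coordinate `k` over all
`(r,s)`-colored overpartitions of `n`. -/
noncomputable def overFDist (r s k n : ℕ) : ℕ :=
  ∑ᶠ P ∈ {P | IsColoredOverpartition r s n P},
    (Multiset.filter (fun p => p.1 = k) P.2).card

/-- `F° k n`: the total number of parts of `ω` with first coordinate `k`, counted with
multiplicity, over all `(r,s)`-colored odd-overlined partitions of `n`. -/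
noncomputable def overFOdd (r s k n : ℕ) : ℕ :=
  ∑ᶠ P ∈ {P | IsColoredOddOverlined r s n P},
    (Multiset.filter (fun p => p.1 = k) P.2).card

/-- `G° k n`: the total number of distinct colored parts of `ω` occurring in `ω` with
multiplicity at least `k`, summed over all `(r,s)`-colored odd-overlined partitions of
`n`. -/
noncomputable def overGOdd (r s k n : ℕ) : ℕ :=
  ∑ᶠ P ∈ {P | IsColoredOddOverlined r s n P},
    (P.2.toFinset.filter fun p => k ≤ P.2.count p).card

/-!
Write `N(m)` for the number of `(r,s)`-colored odd-overlined partitions of `m`. Removing `t`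
copies of an odd colored part `(j, c)` shows that the odd-overlined partitions of `n` containing
it at least `t` times are counted by `N(n - t j)`. Summing over `t` and over the colored parts
gives `F°_k(n) = s ∑_{t ≥ 1} N(n - t k)` and `G°_k(n) = s ∑_{t odd} N(n - t k)`, and splitting
`t` by parity gives the second identity.

For overpartitions, adding or deleting the overlined part `(k, c)` shows that the number `B_c(m)`
of overpartitions of `m` containing it satisfies `B_c(m + k) + B_c(m) = N(m)`: by Glaisher's
bijection (write a distinct part as `2^a b` with `b` odd and replace it by `2^a` copies of `b`)
there are exactly `N(m)` overpartitions of `m`. Hence `B_c(n)` is the alternating sum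
`∑_{t ≥ 1} (-1)^(t-1) N(n - t k) = (G°_k(n) - G°_k(n - k)) / s`, and summing over the `s`
colors gives the first identity.
-/

open Finset

lemma Multiset.le_nsmul_val_of_card_le {β : Type*} [DecidableEq β] {m : Multiset β}
    {t : Finset β} {n : ℕ} (hmt : ∀ p ∈ m, p ∈ t) (hm : Multiset.card m ≤ n) :
    m ≤ n • t.val := by
  refine Multiset.le_iff_count.mpr fun p => ?_
  by_cases hp : p ∈ m
  · rw [Multiset.count_nsmul, Multiset.count_eq_one_of_mem t.nodup (hmt p hp), mul_one]
    exact (Multiset.count_le_card p m).trans hm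
  · simp [Multiset.count_eq_zero_of_notMem hp]

lemma finite_setOf_sum_fst_le (n b : ℕ) :
    {m : Multiset (ℕ × ℕ) | (∀ p ∈ m, 0 < p.1 ∧ p.2 ≤ b) ∧ (m.map Prod.fst).sum ≤ n}.Finite := by
  refine (Set.finite_Iic (n • (range (n + 1) ×ˢ range (b + 1)).val)).subset ?_
  rintro m ⟨hparts, hsum⟩
  have hcard : Multiset.card m ≤ n :=
    calc Multiset.card m = (m.map fun _ => 1).sum := by simp
      _ ≤ (m.map Prod.fst).sum := Multiset.sum_map_le_sum_map _ _ fun p hp => (hparts p hp).1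
      _ ≤ n := hsum
  refine Multiset.le_nsmul_val_of_card_le (fun p hp => ?_) hcard
  have hp1 : p.1 ≤ n := (Multiset.le_sum_of_mem (Multiset.mem_map_of_mem _ hp)).trans hsum
  simp only [mem_product, mem_range]
  exact ⟨by omega, by have := (hparts p hp).2; omega⟩

lemma finite_setOf_isColoredOverpartition (r s n : ℕ) :
    {P | IsColoredOverpartition r s n P}.Finite := by
  refine ((finite_setOf_sum_fst_le n r).prod (finite_setOf_sum_fst_le n s)).subset ?_
  rintro P ⟨hμ, hν, -, hsum⟩
  exact ⟨⟨fun p hp => ⟨(hμ p hp).1, (hμ p hp).2.2⟩, by omega⟩,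
    ⟨fun p hp => ⟨(hν p hp).1, (hν p hp).2.2⟩, by omega⟩⟩

lemma finite_setOf_isColoredOddOverlined (r s n : ℕ) :
    {P | IsColoredOddOverlined r s n P}.Finite := by
  refine ((finite_setOf_sum_fst_le n r).prod (finite_setOf_sum_fst_le n s)).subset ?_
  rintro P ⟨hμ, hω, hsum⟩
  exact ⟨⟨fun p hp => ⟨(hμ p hp).1, (hμ p hp).2.2⟩, by omega⟩,
    ⟨fun p hp => ⟨(hω p hp).1.pos, (hω p hp).2.2⟩, by omega⟩⟩

noncomputable def coloredOverpartitions (r s n : ℕ) :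
    Finset (Multiset (ℕ × ℕ) × Multiset (ℕ × ℕ)) :=
  (finite_setOf_isColoredOverpartition r s n).toFinset

noncomputable def coloredOddOverlined (r s n : ℕ) :
    Finset (Multiset (ℕ × ℕ) × Multiset (ℕ × ℕ)) :=
  (finite_setOf_isColoredOddOverlined r s n).toFinset

@[simp]
lemma mem_coloredOverpartitions {r s n : ℕ} {P : Multiset (ℕ × ℕ) × Multiset (ℕ × ℕ)} :
    P ∈ coloredOverpartitions r s n ↔ IsColoredOverpartition r s n P :=
  Set.Finite.mem_toFinset _

@[simp]
lemma mem_coloredOddOverlined {r s n : ℕ} {P : Multiset (ℕ × ℕ) × Multiset (ℕ × ℕ)} :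
    P ∈ coloredOddOverlined r s n ↔ IsColoredOddOverlined r s n P :=
  Set.Finite.mem_toFinset _

lemma overFDist_eq_sum (r s k n : ℕ) :
    overFDist r s k n =
      ∑ P ∈ coloredOverpartitions r s n, (P.2.filter fun p => p.1 = k).card :=
  finsum_mem_eq_finite_toFinset_sum _ _

lemma overFOdd_eq_sum (r s k n : ℕ) :
    overFOdd r s k n =
      ∑ P ∈ coloredOddOverlined r s n, (P.2.filter fun p => p.1 = k).card :=
  finsum_mem_eq_finite_toFinset_sum _ _

lemma overGOdd_eq_sum (r s k n : ℕ) :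
    overGOdd r s k n =
      ∑ P ∈ coloredOddOverlined r s n, #{p ∈ P.2.toFinset | k ≤ P.2.count p} :=
  finsum_mem_eq_finite_toFinset_sum _ _

section Glaisher

variable {α : Type*}

lemma Nat.factorization_two_pow_mul_odd {b : ℕ} (hb : Odd b) (a : ℕ) :
    (2 ^ a * b).factorization 2 = a := by
  simp [Nat.factorization_mul (pow_ne_zero a two_ne_zero) hb.pos.ne',
    Nat.factorization_eq_zero_of_not_dvd hb.not_two_dvd_nat, Nat.prime_two.factorization_self]

lemma Nat.ordCompl_two_pow_mul_odd {b : ℕ} (hb : Odd b) (a : ℕ) : ordCompl[2] (2 ^ a * b) = b :=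
  Nat.ordCompl_pow_mul_of_not_dvd a Nat.prime_two hb.not_two_dvd_nat

lemma Nat.two_pow_mul_odd_inj {a a' b b' : ℕ} (hb : Odd b) (hb' : Odd b')
    (h : 2 ^ a * b = 2 ^ a' * b') : a = a' ∧ b = b' := by
  obtain rfl : b = b' := by
    rw [← Nat.ordCompl_two_pow_mul_odd hb a, h, Nat.ordCompl_two_pow_mul_odd hb']
  exact ⟨Nat.pow_right_injective le_rfl (Nat.eq_of_mul_eq_mul_right hb.pos h), rfl⟩

def glaisher (ν : Multiset (ℕ × α)) : Multiset (ℕ × α) :=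
  ν.bind fun p => Multiset.replicate (ordProj[2] p.1) (ordCompl[2] p.1, p.2)

lemma sum_fst_glaisher (ν : Multiset (ℕ × α)) :
    ((glaisher ν).map Prod.fst).sum = (ν.map Prod.fst).sum := by
  simp [glaisher, Multiset.map_bind, Multiset.sum_bind, Nat.ordProj_mul_ordCompl_eq_self]

lemma exists_of_mem_glaisher {ν : Multiset (ℕ × α)} {q : ℕ × α} (hq : q ∈ glaisher ν) :
    ∃ p ∈ ν, q = (ordCompl[2] p.1, p.2) := by
  obtain ⟨p, hp, hq⟩ := Multiset.mem_bind.mp hq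
  exact ⟨p, hp, Multiset.eq_of_mem_replicate hq⟩

lemma odd_fst_of_mem_glaisher {ν : Multiset (ℕ × α)} (hν : ∀ p ∈ ν, 0 < p.1) {q : ℕ × α}
    (hq : q ∈ glaisher ν) : Odd q.1 := by
  obtain ⟨p, hp, rfl⟩ := exists_of_mem_glaisher hq
  exact Nat.not_even_iff_odd.mp fun h =>
    Nat.not_dvd_ordCompl Nat.prime_two (hν p hp).ne' h.two_dvd

variable [DecidableEq α]

def unglaisher (ω : Multiset (ℕ × α)) : Multiset (ℕ × α) :=
  (ω.toFinset.biUnion fun q =>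
    (ω.count q).bitIndices.toFinset.image fun a => (2 ^ a * q.1, q.2)).val

lemma mem_unglaisher {ω : Multiset (ℕ × α)} {p : ℕ × α} :
    p ∈ unglaisher ω ↔ ∃ q ∈ ω, ∃ a ∈ (ω.count q).bitIndices, (2 ^ a * q.1, q.2) = p := by
  simp [unglaisher]

lemma unglaisher_nodup (ω : Multiset (ℕ × α)) : (unglaisher ω).Nodup :=
  Finset.nodup _

lemma mem_iff_mem_bitIndices_count_glaisher {ν : Multiset (ℕ × α)} (hν : ν.Nodup) {b : ℕ}
    (hb : Odd b) (a : ℕ) (c : α) :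
    (2 ^ a * b, c) ∈ ν ↔ a ∈ ((glaisher ν).count (b, c)).bitIndices := by
  set F := ν.toFinset.filter fun p => (ordCompl[2] p.1, p.2) = (b, c)
  have hF : ∀ p ∈ F, p = (2 ^ p.1.factorization 2 * b, c) := by
    intro p hp
    obtain ⟨-, hpb⟩ := Finset.mem_filter.mp hp
    rw [Prod.mk.injEq] at hpb
    rw [← hpb.1, Nat.ordProj_mul_ordCompl_eq_self, ← hpb.2]
  have hcount : (glaisher ν).count (b, c) = ∑ a ∈ F.image (·.1.factorization 2), 2 ^ a := by
    rw [Finset.sum_image fun p hp q hq h => by rw [hF p hp, hF q hq, h], Finset.sum_filter,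
      glaisher, Multiset.count_bind, Finset.sum, Multiset.toFinset_val, hν.dedup]
    simp_rw [Multiset.count_replicate]
  rw [← List.mem_toFinset, hcount, Finset.toFinset_bitIndices_sum_two_pow, Finset.mem_image]
  constructor
  · intro h
    refine ⟨_, Finset.mem_filter.mpr ⟨Multiset.mem_toFinset.mpr h, ?_⟩,
      Nat.factorization_two_pow_mul_odd hb a⟩
    rw [Nat.ordCompl_two_pow_mul_odd hb]
  · rintro ⟨p, hp, rfl⟩
    rw [← hF p hp]
    exact Multiset.mem_toFinset.mp (Finset.mem_filter.mp hp).1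

lemma mem_unglaisher_iff {ω : Multiset (ℕ × α)} (hω : ∀ q ∈ ω, Odd q.1) {b : ℕ} (hb : Odd b)
    (a : ℕ) (c : α) : (2 ^ a * b, c) ∈ unglaisher ω ↔ a ∈ (ω.count (b, c)).bitIndices := by
  rw [mem_unglaisher]
  constructor
  · rintro ⟨q, hq, a', ha', hqa⟩
    rw [Prod.mk.injEq] at hqa
    obtain ⟨rfl, rfl⟩ := Nat.two_pow_mul_odd_inj (hω q hq) hb hqa.1
    rwa [← hqa.2]
  · intro ha
    refine ⟨(b, c), Multiset.count_pos.mp (Nat.pos_of_ne_zero ?_), a, ha, rfl⟩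
    rintro h
    simp [h] at ha

lemma unglaisher_glaisher {ν : Multiset (ℕ × α)} (hν : ν.Nodup) (hpos : ∀ p ∈ ν, 0 < p.1) :
    unglaisher (glaisher ν) = ν := by
  have hodd := fun q => odd_fst_of_mem_glaisher hpos (q := q)
  refine (Multiset.Nodup.ext (unglaisher_nodup _) hν).mpr fun ⟨x, c⟩ => ?_
  rcases Nat.eq_zero_or_pos x with rfl | hx
  · refine iff_of_false (fun h => ?_) fun h => (hpos _ h).false
    obtain ⟨q, hq, a, -, hqa⟩ := mem_unglaisher.mp h
    exact (Nat.mul_pos (Nat.two_pow_pos a) (hodd q hq).pos).ne' (congrArg Prod.fst hqa)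
  · obtain ⟨a, b, hb, rfl⟩ := Nat.exists_eq_two_pow_mul_odd hx.ne'
    rw [mem_unglaisher_iff hodd hb, mem_iff_mem_bitIndices_count_glaisher hν hb]

lemma glaisher_unglaisher {ω : Multiset (ℕ × α)} (hω : ∀ q ∈ ω, Odd q.1) :
    glaisher (unglaisher ω) = ω := by
  have hpos : ∀ p ∈ unglaisher ω, 0 < p.1 := fun p hp => by
    obtain ⟨q, hq, a, -, rfl⟩ := mem_unglaisher.mp hp
    exact Nat.mul_pos (Nat.two_pow_pos a) (hω q hq).pos
  refine Multiset.ext.mpr fun ⟨b, c⟩ => ?_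
  by_cases hb : Odd b
  · refine Finset.equivBitIndices.injective (Finset.ext fun a => ?_)
    simp only [Finset.equivBitIndices_apply, List.mem_toFinset]
    rw [← mem_iff_mem_bitIndices_count_glaisher (unglaisher_nodup ω) hb,
      mem_unglaisher_iff hω hb]
  · rw [Multiset.count_eq_zero.mpr fun h => hb (odd_fst_of_mem_glaisher hpos h),
      Multiset.count_eq_zero.mpr fun h => hb (hω _ h)]

end Glaisher

theorem card_coloredOverpartitions (r s n : ℕ) :
    #(coloredOverpartitions r s n) = #(coloredOddOverlined r s n) := by
  refine Finset.card_nbij' (fun P => (P.1, glaisher P.2)) (fun Q => (Q.1, unglaisher Q.2))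
    ?_ ?_ ?_ ?_
  · rintro ⟨μ, ν⟩ hP
    obtain ⟨hμ, hν, -, hsum⟩ := mem_coloredOverpartitions.mp hP
    refine mem_coloredOddOverlined.mpr ⟨hμ, fun q hq => ⟨?_, ?_⟩, by simpa [sum_fst_glaisher]⟩
    · exact odd_fst_of_mem_glaisher (fun p hp => (hν p hp).1) hq
    · obtain ⟨p, hp, rfl⟩ := exists_of_mem_glaisher hq
      exact (hν p hp).2
  · rintro ⟨μ, ω⟩ hQ
    obtain ⟨hμ, hω, hsum⟩ := mem_coloredOddOverlined.mp hQ
    have hωodd : ∀ q ∈ ω, Odd q.1 := fun q hq => (hω q hq).1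
    refine mem_coloredOverpartitions.mpr ⟨hμ, fun p hp => ?_, unglaisher_nodup ω, ?_⟩
    · obtain ⟨q, hq, a, -, rfl⟩ := mem_unglaisher.mp hp
      exact ⟨Nat.mul_pos (Nat.two_pow_pos a) (hω q hq).1.pos, (hω q hq).2⟩
    · dsimp only
      rwa [← sum_fst_glaisher (unglaisher ω), glaisher_unglaisher hωodd]
  · rintro ⟨μ, ν⟩ hP
    obtain ⟨-, hν, hnd, -⟩ := mem_coloredOverpartitions.mp hP
    exact Prod.ext rfl (unglaisher_glaisher hnd fun p hp => (hν p hp).1)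
  · rintro ⟨μ, ω⟩ hQ
    obtain ⟨-, hω, -⟩ := mem_coloredOddOverlined.mp hQ
    exact Prod.ext rfl (glaisher_unglaisher fun q hq => (hω q hq).1)

section ShiftSum

def shiftSum (f : ℕ → ℕ) (k m : ℕ) : ℕ :=
  ∑ i ∈ range (m / k), f (m - (i + 1) * k)

-- `2 * i + 1` runs over the odd `t` with `t * k ≤ m`
def oddShiftSum (f : ℕ → ℕ) (k m : ℕ) : ℕ :=
  ∑ i ∈ range ((m / k + 1) / 2), f (m - (2 * i + 1) * k)

variable {f : ℕ → ℕ} {k : ℕ}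

lemma shiftSum_of_lt {m : ℕ} (h : m < k) : shiftSum f k m = 0 := by
  simp [shiftSum, Nat.div_eq_of_lt h]

lemma oddShiftSum_of_lt {m : ℕ} (h : m < k) : oddShiftSum f k m = 0 := by
  simp [oddShiftSum, Nat.div_eq_of_lt h]

lemma shiftSum_add (hk : 0 < k) (m : ℕ) : shiftSum f k (m + k) = f m + shiftSum f k m := by
  rw [shiftSum, Nat.add_div_right m hk, sum_range_succ', add_comm, zero_add, one_mul,
    Nat.add_sub_cancel]
  congr 1
  refine sum_congr rfl fun i _ => congrArg f ?_
  rw [add_mul, one_mul]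
  omega

lemma oddShiftSum_add (hk : 0 < k) (m : ℕ) :
    oddShiftSum f k (m + k) = f m + oddShiftSum f k (m - k) := by
  have hlen : ((m + k) / k + 1) / 2 = ((m - k) / k + 1) / 2 + 1 := by
    rcases lt_or_ge m k with h | h
    · rw [Nat.add_div_right m hk, Nat.div_eq_of_lt h, Nat.sub_eq_zero_of_le h.le, Nat.zero_div]
    · obtain ⟨m, rfl⟩ := Nat.exists_eq_add_of_le' h
      rw [Nat.add_div_right _ hk, Nat.add_div_right m hk, Nat.add_sub_cancel]
      omega
  rw [oddShiftSum, hlen, sum_range_succ', add_comm, mul_zero, zero_add, one_mul,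
    Nat.add_sub_cancel]
  congr 1
  refine sum_congr rfl fun i _ => congrArg f ?_
  rw [show (2 * (i + 1) + 1) * k = (2 * i + 1) * k + k + k by ring]
  omega

lemma shiftSum_eq_oddShiftSum_add_oddShiftSum (hk : 0 < k) (m : ℕ) :
    shiftSum f k m = oddShiftSum f k m + oddShiftSum f k (m - k) := by
  induction m using Nat.strong_induction_on with
  | _ m ih =>
    rcases lt_or_ge m k with h | h
    · rw [shiftSum_of_lt h, oddShiftSum_of_lt h, Nat.sub_eq_zero_of_le h.le, oddShiftSum_of_lt hk]
    · obtain ⟨m, rfl⟩ := Nat.exists_eq_add_of_le' h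
      rw [shiftSum_add hk, ih m (by omega), oddShiftSum_add hk, Nat.add_sub_cancel, add_assoc,
        add_comm (oddShiftSum f k m)]

lemma add_oddShiftSum_sub_eq_oddShiftSum (hk : 0 < k) {g : ℕ → ℕ} (hg₀ : ∀ m < k, g m = 0)
    (hg : ∀ m, g (m + k) + g m = f m) (m : ℕ) :
    g m + oddShiftSum f k (m - k) = oddShiftSum f k m := by
  induction m using Nat.strong_induction_on with
  | _ m ih =>
    rcases lt_or_ge m k with h | h
    · rw [hg₀ m h, oddShiftSum_of_lt h, Nat.sub_eq_zero_of_le h.le, oddShiftSum_of_lt hk]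
    · obtain ⟨m, rfl⟩ := Nat.exists_eq_add_of_le' h
      rw [Nat.add_sub_cancel, ← ih m (by omega), ← add_assoc, hg, oddShiftSum_add hk]

end ShiftSum

section Removal

variable {r s : ℕ}

lemma Multiset.sum_fst_sub_replicate_add {α : Type*} [DecidableEq α] {m : Multiset (ℕ × α)}
    {q : ℕ × α} {t : ℕ} (ht : t ≤ m.count q) :
    ((m - Multiset.replicate t q).map Prod.fst).sum + t * q.1 = (m.map Prod.fst).sum := by
  conv_rhs => rw [← tsub_add_cancel_of_le (Multiset.le_count_iff_replicate_le.mp ht)]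
  simp

lemma Multiset.count_mul_le_sum_fst {α : Type*} [DecidableEq α] (m : Multiset (ℕ × α)) (q : ℕ × α) :
    m.count q * q.1 ≤ (m.map Prod.fst).sum :=
  (sum_fst_sub_replicate_add le_rfl).le.trans' le_add_self

lemma card_filter_le_count_coloredOddOverlined {j c : ℕ} (hj : Odd j) (hc₁ : 1 ≤ c)
    (hc₂ : c ≤ s) (t m : ℕ) :
    #{P ∈ coloredOddOverlined r s (m + t * j) | t ≤ P.2.count (j, c)} =
      #(coloredOddOverlined r s m) := by
  refine Finset.card_nbij' (fun P => (P.1, P.2 - Multiset.replicate t (j, c)))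
    (fun Q => (Q.1, Q.2 + Multiset.replicate t (j, c))) ?_ ?_ ?_ ?_
  · rintro ⟨μ, ω⟩ hP
    obtain ⟨hP, ht⟩ := Finset.mem_filter.mp hP
    obtain ⟨hμ, hω, hsum⟩ := mem_coloredOddOverlined.mp hP
    have hsub := Multiset.sum_fst_sub_replicate_add ht
    refine mem_coloredOddOverlined.mpr ⟨hμ, fun q hq => hω q (Multiset.mem_of_le
      (Multiset.sub_le_self _ _) hq), ?_⟩
    dsimp only at hsum hsub ⊢
    omega
  · rintro ⟨μ, ω⟩ hQ
    obtain ⟨hμ, hω, hsum⟩ := mem_coloredOddOverlined.mp hQ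
    refine Finset.mem_filter.mpr ⟨mem_coloredOddOverlined.mpr ⟨hμ, fun q hq => ?_, ?_⟩, ?_⟩
    · rcases Multiset.mem_add.mp hq with hq | hq
      · exact hω q hq
      · rw [Multiset.eq_of_mem_replicate hq]
        exact ⟨hj, hc₁, hc₂⟩
    · simp only [Multiset.map_add, Multiset.sum_add, Multiset.map_replicate,
        Multiset.sum_replicate, smul_eq_mul] at hsum ⊢
      omega
    · simp
  · rintro ⟨μ, ω⟩ hP
    have ht := (Finset.mem_filter.mp hP).2
    exact Prod.ext rfl (tsub_add_cancel_of_le (Multiset.le_count_iff_replicate_le.mp ht))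
  · rintro ⟨μ, ω⟩ -
    exact Prod.ext rfl (add_tsub_cancel_right _ _)

lemma card_filter_mem_coloredOverpartitions_add {k c : ℕ} (hk : 0 < k) (hc₁ : 1 ≤ c)
    (hc₂ : c ≤ s) (m : ℕ) :
    #{P ∈ coloredOverpartitions r s (m + k) | (k, c) ∈ P.2} =
      #{P ∈ coloredOverpartitions r s m | (k, c) ∉ P.2} := by
  refine Finset.card_nbij' (fun P => (P.1, P.2.erase (k, c)))
    (fun Q => (Q.1, (k, c) ::ₘ Q.2)) ?_ ?_ ?_ ?_
  · rintro ⟨μ, ν⟩ hP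
    obtain ⟨hP, hmem⟩ := Finset.mem_filter.mp hP
    obtain ⟨hμ, hν, hnd, hsum⟩ := mem_coloredOverpartitions.mp hP
    have hsum' := congrArg (fun ν => (ν.map Prod.fst).sum) (Multiset.cons_erase hmem)
    simp only [Multiset.map_cons, Multiset.sum_cons] at hsum'
    refine Finset.mem_filter.mpr ⟨mem_coloredOverpartitions.mpr ⟨hμ,
      fun p hp => hν p (Multiset.mem_of_mem_erase hp), hnd.erase _, ?_⟩, hnd.notMem_erase⟩
    dsimp only at hsum ⊢
    omega
  · rintro ⟨μ, ν⟩ hQ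
    obtain ⟨hQ, hmem⟩ := Finset.mem_filter.mp hQ
    obtain ⟨hμ, hν, hnd, hsum⟩ := mem_coloredOverpartitions.mp hQ
    refine Finset.mem_filter.mpr ⟨mem_coloredOverpartitions.mpr ⟨hμ, fun p hp => ?_,
      Multiset.nodup_cons.mpr ⟨hmem, hnd⟩, ?_⟩, Multiset.mem_cons_self _ _⟩
    · rcases Multiset.mem_cons.mp hp with rfl | hp
      · exact ⟨hk, hc₁, hc₂⟩
      · exact hν p hp
    · simp only [Multiset.map_cons, Multiset.sum_cons] at hsum ⊢
      omega
  · rintro ⟨μ, ν⟩ hP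
    exact Prod.ext rfl (Multiset.cons_erase (Finset.mem_filter.mp hP).2)
  · rintro ⟨μ, ν⟩ -
    exact Prod.ext rfl (Multiset.erase_cons_head _ _)

lemma card_filter_mem_coloredOverpartitions_of_lt {k c m : ℕ} (h : m < k) :
    #{P ∈ coloredOverpartitions r s m | (k, c) ∈ P.2} = 0 := by
  refine Finset.card_eq_zero.mpr (Finset.filter_eq_empty_iff.mpr fun P hP hmem => ?_)
  obtain ⟨-, -, -, hsum⟩ := mem_coloredOverpartitions.mp hP
  have := Multiset.le_sum_of_mem (Multiset.mem_map_of_mem Prod.fst hmem)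
  omega

end Removal

section Counting

variable {r s : ℕ}

lemma Multiset.card_filter_fst_eq_sum_count {α : Type*} [DecidableEq α] {m : Multiset (ℕ × α)}
    {C : Finset α} (hm : ∀ p ∈ m, p.2 ∈ C) (k : ℕ) :
    (m.filter fun p => p.1 = k).card = ∑ c ∈ C, m.count (k, c) := by
  rw [← Multiset.sum_count_eq_card (s := {k} ×ˢ C) fun p hp => by
      obtain ⟨hpm, rfl⟩ := Multiset.mem_filter.mp hp
      exact Finset.mem_product.mpr ⟨Finset.mem_singleton_self _, hm p hpm⟩,
    Finset.sum_product, Finset.sum_singleton]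
  exact Finset.sum_congr rfl fun c _ => by simp

lemma overFDist_eq_sum_card_filter_mem (r s k n : ℕ) :
    overFDist r s k n = ∑ c ∈ Icc 1 s, #{P ∈ coloredOverpartitions r s n | (k, c) ∈ P.2} := by
  calc overFDist r s k n
      = ∑ P ∈ coloredOverpartitions r s n, ∑ c ∈ Icc 1 s, if (k, c) ∈ P.2 then 1 else 0 := by
        rw [overFDist_eq_sum]
        refine Finset.sum_congr rfl fun P hP => ?_
        obtain ⟨-, hν, hnd, -⟩ := mem_coloredOverpartitions.mp hP
        rw [Multiset.card_filter_fst_eq_sum_count fun p hp => Finset.mem_Icc.mpr (hν p hp).2]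
        simp_rw [Multiset.count_eq_of_nodup hnd]
    _ = _ := by
        rw [Finset.sum_comm]
        simp_rw [Finset.card_filter]

lemma sum_count_coloredOddOverlined {j c : ℕ} (hj : Odd j) (hc₁ : 1 ≤ c) (hc₂ : c ≤ s)
    (n : ℕ) :
    ∑ P ∈ coloredOddOverlined r s n, P.2.count (j, c) =
      shiftSum (fun m => #(coloredOddOverlined r s m)) j n := by
  calc ∑ P ∈ coloredOddOverlined r s n, P.2.count (j, c)
      = ∑ P ∈ coloredOddOverlined r s n, #{i ∈ range (n / j) | i + 1 ≤ P.2.count (j, c)} := by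
        refine Finset.sum_congr rfl fun P hP => ?_
        obtain ⟨-, -, hsum⟩ := mem_coloredOddOverlined.mp hP
        have : P.2.count (j, c) ≤ n / j :=
          (Nat.le_div_iff_mul_le hj.pos).mpr ((Multiset.count_mul_le_sum_fst _ _).trans (by omega))
        rw [show {i ∈ range (n / j) | i + 1 ≤ P.2.count (j, c)} = range (P.2.count (j, c)) by
          ext i; simp only [mem_filter, mem_range]; omega, card_range]
    _ = ∑ i ∈ range (n / j), #{P ∈ coloredOddOverlined r s n | i + 1 ≤ P.2.count (j, c)} :=
        Finset.sum_card_bipartiteAbove_eq_sum_card_bipartiteBelow _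
    _ = _ := by
        refine Finset.sum_congr rfl fun i hi => ?_
        have hle : (i + 1) * j ≤ n :=
          (Nat.le_div_iff_mul_le hj.pos).mp (Finset.mem_range.mp hi)
        have := card_filter_le_count_coloredOddOverlined (r := r) hj hc₁ hc₂ (i + 1)
          (n - (i + 1) * j)
        rwa [Nat.sub_add_cancel hle] at this

lemma overFOdd_eq_mul_shiftSum {k : ℕ} (hk : Odd k) (n : ℕ) :
    overFOdd r s k n = s * shiftSum (fun m => #(coloredOddOverlined r s m)) k n := by
  calc overFOdd r s k n
      = ∑ P ∈ coloredOddOverlined r s n, ∑ c ∈ Icc 1 s, P.2.count (k, c) := by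
        rw [overFOdd_eq_sum]
        refine Finset.sum_congr rfl fun P hP => ?_
        obtain ⟨-, hω, -⟩ := mem_coloredOddOverlined.mp hP
        exact Multiset.card_filter_fst_eq_sum_count
          (fun p hp => Finset.mem_Icc.mpr (hω p hp).2) k
    _ = ∑ c ∈ Icc 1 s, shiftSum (fun m => #(coloredOddOverlined r s m)) k n := by
        rw [Finset.sum_comm]
        exact Finset.sum_congr rfl fun c hc =>
          sum_count_coloredOddOverlined hk (Finset.mem_Icc.mp hc).1 (Finset.mem_Icc.mp hc).2 n
    _ = _ := by simp

lemma overGOdd_eq_mul_oddShiftSum {k : ℕ} (hk : 0 < k) (n : ℕ) :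
    overGOdd r s k n = s * oddShiftSum (fun m => #(coloredOddOverlined r s m)) k n := by
  set odds := (range ((n / k + 1) / 2)).map
    ⟨fun i => 2 * i + 1, by intro a b h; dsimp only at h; omega⟩
  calc overGOdd r s k n
      = ∑ P ∈ coloredOddOverlined r s n, #{q ∈ odds ×ˢ Icc 1 s | k ≤ P.2.count q} := by
        rw [overGOdd_eq_sum]
        refine Finset.sum_congr rfl fun P hP => congrArg _ (Finset.ext fun ⟨x, c⟩ => ?_)
        obtain ⟨-, hω, hsum⟩ := mem_coloredOddOverlined.mp hP
        simp only [Finset.mem_filter, Multiset.mem_toFinset, Finset.mem_product, Finset.mem_Icc,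
          odds, Finset.mem_map, Finset.mem_range]
        refine and_congr_left fun hkq => ⟨fun hq => ?_, fun _ => Multiset.count_pos.mp (by omega)⟩
        obtain ⟨⟨i, rfl⟩, hc₁, hc₂⟩ := hω _ hq
        have : k * (2 * i + 1) ≤ n := (Nat.mul_le_mul_right _ hkq).trans
          ((Multiset.count_mul_le_sum_fst _ _).trans (by omega))
        have : 2 * i + 1 ≤ n / k := (Nat.le_div_iff_mul_le hk).mpr (by linarith)
        exact ⟨⟨i, by omega, rfl⟩, hc₁, hc₂⟩
    _ = ∑ q ∈ odds ×ˢ Icc 1 s, #{P ∈ coloredOddOverlined r s n | k ≤ P.2.count q} :=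
        Finset.sum_card_bipartiteAbove_eq_sum_card_bipartiteBelow _
    _ = _ := by
        rw [Finset.sum_product, Finset.sum_map, oddShiftSum, Finset.mul_sum]
        refine Finset.sum_congr rfl fun i hi => ?_
        have hle : (2 * i + 1) * k ≤ n := (Nat.le_div_iff_mul_le hk).mp (by
          have := Finset.mem_range.mp hi; omega)
        have hcard : ∀ c ∈ Icc 1 s, #{P ∈ coloredOddOverlined r s n | k ≤ P.2.count (2 * i + 1, c)}
            = #(coloredOddOverlined r s (n - (2 * i + 1) * k)) := fun c hc => by
          have := card_filter_le_count_coloredOddOverlined (r := r) (odd_two_mul_add_one i)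
            (Finset.mem_Icc.mp hc).1 (Finset.mem_Icc.mp hc).2 k (n - (2 * i + 1) * k)
          rwa [mul_comm k, Nat.sub_add_cancel hle] at this
        refine (Finset.sum_congr rfl hcard).trans ?_
        rw [Finset.sum_const, Nat.card_Icc, smul_eq_mul, Nat.add_sub_cancel]

lemma overFDist_add_mul_oddShiftSum {k : ℕ} (hk : 0 < k) (n : ℕ) :
    overFDist r s k n + s * oddShiftSum (fun m => #(coloredOddOverlined r s m)) k (n - k) =
      s * oddShiftSum (fun m => #(coloredOddOverlined r s m)) k n := by
  have hcolour : ∀ c ∈ Icc 1 s,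
      #{P ∈ coloredOverpartitions r s n | (k, c) ∈ P.2} +
          oddShiftSum (fun m => #(coloredOddOverlined r s m)) k (n - k) =
        oddShiftSum (fun m => #(coloredOddOverlined r s m)) k n := fun c hc =>
    add_oddShiftSum_sub_eq_oddShiftSum hk (fun _ => card_filter_mem_coloredOverpartitions_of_lt)
      (fun m => by
        rw [card_filter_mem_coloredOverpartitions_add hk (Finset.mem_Icc.mp hc).1
          (Finset.mem_Icc.mp hc).2, add_comm, Finset.card_filter_add_card_filter_not,
          card_coloredOverpartitions]) n
  have hsum := Finset.sum_congr rfl hcolour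
  rwa [Finset.sum_add_distrib, Finset.sum_const, Finset.sum_const, Nat.card_Icc,
    Nat.add_sub_cancel, smul_eq_mul, smul_eq_mul, ← overFDist_eq_sum_card_filter_mem] at hsum

end Counting

theorem overFDist_overFOdd_eq_general (r s : ℕ) (n k : ℕ) (hk : 0 < k) :
    ((overFDist r s k n : ℤ) = (overGOdd r s k n : ℤ) - (overGOdd r s k (n - k) : ℤ)) ∧
    (Odd k → overFOdd r s k n = overGOdd r s k n + overGOdd r s k (n - k)) := by
  rw [overGOdd_eq_mul_oddShiftSum hk, overGOdd_eq_mul_oddShiftSum hk]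
  refine ⟨?_, fun hodd => ?_⟩
  · rw [eq_sub_iff_add_eq]
    exact_mod_cast overFDist_add_mul_oddShiftSum hk n
  · rw [overFOdd_eq_mul_shiftSum hodd, shiftSum_eq_oddShiftSum_add_oddShiftSum hk, mul_add]

/-- `F^d_k(n) = G°_k(n) - G°_k(n-k)`, and for odd `k`, `F°_k(n) = G°_k(n) + G°_k(n-k)`. -/
theorem overFDist_overFOdd_eq (r s : ℕ) (hr : 0 < r) (hs : 0 < s) (n k : ℕ)
    (hn : 0 < n) (hk : 0 < k) :
    ((overFDist r s k n : ℤ) = (overGOdd r s k n : ℤ) - (overGOdd r s k (n - k) : ℤ)) ∧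
    (Odd k → overFOdd r s k n = overGOdd r s k n + overGOdd r s k (n - k)) :=
  overFDist_overFOdd_eq_general r s n k hk
end

section
/- For every positive integer n, F̄_1(n) = Ḡ_1(n) − Ḡ_3(n): the total number of parts equal to 1 or 1̄ over all overpartitions of n equals the total number of parts appearing at least once minus the total number of parts appearing at least three times, summed over all overpartitions of n. -/
/-- An overpartition of `n`: a pair `(μ, ν)` where `μ` is a multiset of positive integers
and `ν` is a finite set of positive integers (the overlined parts), such that the sum of the
elements of `μ` counted with multiplicity plus the sum of the elements of `ν` equals `n`. -/
def IsOverpartition (n : ℕ) (P : Multiset ℕ × Finset ℕ) : Prop :=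
  (∀ m ∈ P.1, 0 < m) ∧ (∀ m ∈ P.2, 0 < m) ∧ P.1.sum + ∑ m ∈ P.2, m = n

/-- `F̄₁ n`: the sum, over all overpartitions `(μ, ν)` of `n`, of the multiplicity of `1`
in `μ` plus `1` if `1 ∈ ν`. -/
noncomputable def overlineF1 (n : ℕ) : ℕ :=
  ∑ᶠ P ∈ {P | IsOverpartition n P},
    (P.1.count 1 + if 1 ∈ P.2 then 1 else 0)

/-- `Ḡ k n`: the sum, over all overpartitions `(μ, ν)` of `n`, of the number of positive
integers `m` whose total multiplicity — the multiplicity of `m` in `μ` plus `1` if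
`m ∈ ν` — is at least `k`. -/
noncomputable def overlineG (k n : ℕ) : ℕ :=
  ∑ᶠ P ∈ {P | IsOverpartition n P},
    ((P.1.toFinset ∪ P.2).filter fun m =>
      k ≤ P.1.count m + if m ∈ P.2 then 1 else 0).card

/-!
Write `a_m(N, k) = #(withMultGe m k N)` for the number of overpartitions of `N` in which `m` has
total multiplicity at least `k`. If the total multiplicity of `m` is at least two, one copy of `m`
is not overlined, and removing it gives `a_m(N + m, k + 2) = a_m(N, k + 1)`. An overpartition of
`N + m` containing `m` arises from an overpartition of `N` either by adding a non-overlined `m`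
(`p̄(N)` ways) or by adding an overlined `m` to one not containing `m` (`p̄(N) - a_m(N, 1)` ways),
so `a_m(N + m, 1) + a_m(N, 1) = 2 p̄(N)`. Together, these give
`a_m(N, k + 1) + a_m(N, k + 2) = 2 p̄(N - (k + 1) m)`.

Now `F̄₁(n) = ∑_k a_1(n, k)`, and grouping `k` in consecutive pairs gives `2 ∑_{j odd} p̄(n - j)`.
On the other side `Ḡ₁(n) - Ḡ₃(n) = ∑_m (a_m(n, 1) - a_m(n, 3)) = 2 ∑_m (p̄(n - m) - p̄(n - 2m))`,
in which the terms with even `j = 2m` cancel, leaving the same sum over odd `j`.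
-/

open Finset

lemma Finset.sum_range_two_mul {M : Type*} [AddCommMonoid M] (f : ℕ → M) (n : ℕ) :
    ∑ i ∈ range (2 * n), f i = ∑ i ∈ range n, (f (2 * i) + f (2 * i + 1)) := by
  induction n with
  | zero => simp
  | succ n ih => rw [mul_add_one, sum_range_succ, sum_range_succ, ih, sum_range_succ, add_assoc]

lemma Finset.sum_Icc_sub_two_mul {M : Type*} [AddCommGroup M] {n : ℕ} {φ : ℕ → M}
    (hφ : ∀ j, n < j → φ j = 0) :
    ∑ m ∈ Icc 1 n, (φ m - φ (2 * m)) = ∑ i ∈ range n, φ (2 * i + 1) := by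
  have hpad : ∑ i ∈ range (2 * n), φ (i + 1) = ∑ i ∈ range n, φ (i + 1) := by
    rw [two_mul, sum_range_add, add_eq_left]
    exact sum_eq_zero fun i _ => hφ _ (by omega)
  calc ∑ m ∈ Icc 1 n, (φ m - φ (2 * m))
      = ∑ i ∈ range n, (φ (i + 1) - φ (2 * i + 1 + 1)) := by
        rw [← Ico_add_one_right_eq_Icc, sum_Ico_eq_sum_range, add_tsub_cancel_right]
        refine sum_congr rfl fun i _ => ?_
        rw [add_comm 1 i, show 2 * (i + 1) = 2 * i + 1 + 1 by ring]
    _ = ∑ i ∈ range n, φ (2 * i + 1) := by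
        rw [sum_sub_distrib, ← hpad, sum_range_two_mul, sum_add_distrib, add_sub_cancel_right]

namespace Overpartition

def mult (m : ℕ) (P : Multiset ℕ × Finset ℕ) : ℕ :=
  P.1.count m + if m ∈ P.2 then 1 else 0

lemma one_le_mult_iff {m : ℕ} {P : Multiset ℕ × Finset ℕ} :
    1 ≤ mult m P ↔ m ∈ P.1 ∨ m ∈ P.2 := by
  unfold mult
  split_ifs with h <;> simp [h, Nat.one_le_iff_ne_zero]

lemma mem_fst_of_two_le_mult {m : ℕ} {P : Multiset ℕ × Finset ℕ} (h : 2 ≤ mult m P) :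
    m ∈ P.1 := by
  unfold mult at h
  rw [← Multiset.count_pos]
  split_ifs at h <;> omega

lemma mult_cons_self (m : ℕ) (μ : Multiset ℕ) (ν : Finset ℕ) :
    mult m (m ::ₘ μ, ν) = mult m (μ, ν) + 1 := by
  simp only [mult, Multiset.count_cons_self]
  omega

lemma count_mul_le_sum (μ : Multiset ℕ) (m : ℕ) : μ.count m * m ≤ μ.sum := by
  obtain ⟨μ', hμ'⟩ := Multiset.le_iff_exists_add.mp
    (Multiset.le_count_iff_replicate_le.mp le_rfl : Multiset.replicate (μ.count m) m ≤ μ)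
  conv_rhs => rw [hμ', Multiset.sum_add, Multiset.sum_replicate, smul_eq_mul]
  exact Nat.le_add_right _ _

lemma mult_mul_le {N m : ℕ} {P : Multiset ℕ × Finset ℕ} (hP : IsOverpartition N P) :
    mult m P * m ≤ N := by
  have hμ := count_mul_le_sum P.1 m
  have hν : (if m ∈ P.2 then 1 else 0) * m ≤ ∑ x ∈ P.2, x := by
    split_ifs with h
    · simpa using single_le_sum (f := fun x => x) (fun _ _ => Nat.zero_le _) h
    · simp
  obtain ⟨-, -, hsum⟩ := hP
  rw [mult, add_mul]
  omega

lemma mem_Icc_of_one_le_mult {N m : ℕ} {P : Multiset ℕ × Finset ℕ} (hP : IsOverpartition N P)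
    (h : 1 ≤ mult m P) : m ∈ Icc 1 N := by
  have hm : 0 < m := (one_le_mult_iff.mp h).elim (hP.1 m) (hP.2.1 m)
  have := mult_mul_le (m := m) hP
  exact mem_Icc.mpr ⟨hm, by nlinarith⟩

lemma finite_setOf_isOverpartition (N : ℕ) : {P | IsOverpartition N P}.Finite := by
  have hμ : (⋃ s ∈ Set.Iic N, Set.range fun p : s.Partition => p.parts).Finite :=
    (Set.finite_Iic N).biUnion fun s _ => Set.finite_range _
  refine (hμ.prod (range (N + 1)).powerset.finite_toSet).subset ?_
  rintro ⟨μ, ν⟩ ⟨hμ, -, hsum⟩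
  simp only at hμ hsum
  refine ⟨Set.mem_iUnion₂.mpr
    ⟨μ.sum, Set.mem_Iic.mpr (by omega), ⟨μ, fun h => hμ _ h, rfl⟩, rfl⟩, ?_⟩
  rw [mem_coe, mem_powerset]
  intro x hx
  have : x ≤ ∑ y ∈ ν, y := single_le_sum (f := fun y => y) (fun _ _ => Nat.zero_le _) hx
  rw [mem_range]
  omega

noncomputable def overpartitions (N : ℕ) : Finset (Multiset ℕ × Finset ℕ) :=
  (finite_setOf_isOverpartition N).toFinset

@[simp]
lemma mem_overpartitions {N : ℕ} {P : Multiset ℕ × Finset ℕ} :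
    P ∈ overpartitions N ↔ IsOverpartition N P :=
  Set.Finite.mem_toFinset _

lemma coe_overpartitions (N : ℕ) :
    (overpartitions N : Set (Multiset ℕ × Finset ℕ)) = {P | IsOverpartition N P} :=
  Set.Finite.coe_toFinset _

lemma isOverpartition_cons_iff {N m : ℕ} (hm : 0 < m) {μ : Multiset ℕ} {ν : Finset ℕ} :
    IsOverpartition (N + m) (m ::ₘ μ, ν) ↔ IsOverpartition N (μ, ν) := by
  simp only [IsOverpartition, Multiset.mem_cons, forall_eq_or_imp, Multiset.sum_cons, hm, true_and]
  constructor <;> rintro ⟨h1, h2, h3⟩ <;> exact ⟨h1, h2, by omega⟩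

lemma isOverpartition_insert_iff {N m : ℕ} (hm : 0 < m) {μ : Multiset ℕ} {ν : Finset ℕ}
    (hmν : m ∉ ν) : IsOverpartition (N + m) (μ, insert m ν) ↔ IsOverpartition N (μ, ν) := by
  simp only [IsOverpartition, mem_insert, forall_eq_or_imp, sum_insert hmν, hm, true_and]
  constructor <;> rintro ⟨h1, h2, h3⟩ <;> exact ⟨h1, h2, by omega⟩

lemma card_filter_mem_fst {N m : ℕ} (hm : 0 < m) (r : Multiset ℕ × Finset ℕ → Prop)
    [DecidablePred r] :
    #((overpartitions (N + m)).filter fun P => m ∈ P.1 ∧ r P) =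
      #((overpartitions N).filter fun Q => r (m ::ₘ Q.1, Q.2)) := by
  refine card_nbij' (fun P => (P.1.erase m, P.2)) (fun Q => (m ::ₘ Q.1, Q.2)) ?_ ?_ ?_ ?_
  · rintro ⟨μ, ν⟩ hP
    simp only [coe_filter, Set.mem_ofPred_eq, mem_overpartitions] at hP ⊢
    obtain ⟨hP, hmμ, hr⟩ := hP
    rw [← Multiset.cons_erase hmμ] at hP hr
    exact ⟨(isOverpartition_cons_iff hm).mp hP, hr⟩
  · rintro ⟨μ, ν⟩ hQ
    simp only [coe_filter, Set.mem_ofPred_eq, mem_overpartitions] at hQ ⊢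
    exact ⟨(isOverpartition_cons_iff hm).mpr hQ.1, Multiset.mem_cons_self _ _, hQ.2⟩
  · rintro ⟨μ, ν⟩ hP
    simp only [coe_filter, Set.mem_ofPred_eq] at hP
    simp [Multiset.cons_erase hP.2.1]
  · rintro ⟨μ, ν⟩ -
    simp

lemma card_filter_mem_snd {N m : ℕ} (hm : 0 < m) (r : Multiset ℕ × Finset ℕ → Prop)
    [DecidablePred r] :
    #((overpartitions (N + m)).filter fun P => m ∈ P.2 ∧ r P) =
      #((overpartitions N).filter fun Q => m ∉ Q.2 ∧ r (Q.1, insert m Q.2)) := by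
  refine card_nbij' (fun P => (P.1, P.2.erase m)) (fun Q => (Q.1, insert m Q.2)) ?_ ?_ ?_ ?_
  · rintro ⟨μ, ν⟩ hP
    simp only [coe_filter, Set.mem_ofPred_eq, mem_overpartitions] at hP ⊢
    obtain ⟨hP, hmν, hr⟩ := hP
    rw [← insert_erase hmν] at hP hr
    exact ⟨(isOverpartition_insert_iff hm (notMem_erase m ν)).mp hP, notMem_erase m ν, hr⟩
  · rintro ⟨μ, ν⟩ hQ
    simp only [coe_filter, Set.mem_ofPred_eq, mem_overpartitions] at hQ ⊢
    obtain ⟨hQ, hmν, hr⟩ := hQ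
    exact ⟨(isOverpartition_insert_iff hm hmν).mpr hQ, mem_insert_self m ν, hr⟩
  · rintro ⟨μ, ν⟩ hP
    simp only [coe_filter, Set.mem_ofPred_eq] at hP
    simp [insert_erase hP.2.1]
  · rintro ⟨μ, ν⟩ hQ
    simp only [coe_filter, Set.mem_ofPred_eq] at hQ
    simp [erase_insert hQ.2.1]

noncomputable def withMultGe (m k N : ℕ) : Finset (Multiset ℕ × Finset ℕ) :=
  (overpartitions N).filter fun P => k ≤ mult m P

lemma withMultGe_eq_empty {m k N : ℕ} (h : N < k * m) : withMultGe m k N = ∅ := by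
  refine filter_eq_empty_iff.mpr fun P hP hk => ?_
  have := mult_mul_le (m := m) (mem_overpartitions.mp hP)
  have := Nat.mul_le_mul_right m hk
  omega

lemma card_withMultGe_add_two {m : ℕ} (hm : 0 < m) (k N : ℕ) :
    #(withMultGe m (k + 2) (N + m)) = #(withMultGe m (k + 1) N) := by
  calc #(withMultGe m (k + 2) (N + m))
      = #((overpartitions (N + m)).filter fun P => m ∈ P.1 ∧ k + 2 ≤ mult m P) := by
        rw [withMultGe]
        congr 1
        exact filter_congr fun P _ =>
          ⟨fun h => ⟨mem_fst_of_two_le_mult (by omega), h⟩, And.right⟩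
    _ = #((overpartitions N).filter fun Q => k + 2 ≤ mult m (m ::ₘ Q.1, Q.2)) :=
        card_filter_mem_fst hm _
    _ = #(withMultGe m (k + 1) N) := by
        simp only [mult_cons_self, Prod.mk.eta, withMultGe]
        congr 1
        exact filter_congr fun Q _ => by omega

lemma card_withMultGe_one_add {m : ℕ} (hm : 0 < m) (N : ℕ) :
    #(withMultGe m 1 (N + m)) + #(withMultGe m 1 N) = 2 * #(overpartitions N) := by
  have hsplit : #(withMultGe m 1 (N + m)) =
      #((overpartitions (N + m)).filter fun P => m ∈ P.1 ∧ True) +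
        #((overpartitions (N + m)).filter fun P => m ∈ P.2 ∧ m ∉ P.1) := by
    simp only [withMultGe, card_filter, ← sum_add_distrib]
    refine sum_congr rfl fun P _ => ?_
    simp only [one_le_mult_iff]
    by_cases h1 : m ∈ P.1 <;> by_cases h2 : m ∈ P.2 <;> simp [h1, h2]
  have hfree : #((overpartitions N).filter fun Q => m ∉ Q.2 ∧ m ∉ Q.1) +
      #(withMultGe m 1 N) = #(overpartitions N) := by
    rw [add_comm, withMultGe,
      ← card_filter_add_card_filter_not (s := overpartitions N) (fun Q => 1 ≤ mult m Q)]
    congr 2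
    refine filter_congr fun Q _ => ?_
    rw [one_le_mult_iff]
    tauto
  rw [hsplit, card_filter_mem_fst hm, card_filter_mem_snd hm]
  simp only [filter_true]
  omega

lemma card_withMultGe_succ_add_succ_succ {m : ℕ} (hm : 0 < m) (k N : ℕ) :
    #(withMultGe m (k + 1) N) + #(withMultGe m (k + 2) N) =
      if (k + 1) * m ≤ N then 2 * #(overpartitions (N - (k + 1) * m)) else 0 := by
  induction k generalizing N with
  | zero =>
    rcases lt_or_ge N m with hN | hN
    · rw [withMultGe_eq_empty (by omega), withMultGe_eq_empty (by omega), if_neg (by omega)]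
      rfl
    · obtain ⟨M, rfl⟩ := Nat.exists_eq_add_of_le' hN
      rw [card_withMultGe_add_two hm, card_withMultGe_one_add hm, if_pos (by omega)]
      simp
  | succ k ih =>
    rcases lt_or_ge N m with hN | hN
    · rw [withMultGe_eq_empty (by nlinarith), withMultGe_eq_empty (by nlinarith),
        if_neg (by nlinarith)]
      rfl
    · obtain ⟨M, rfl⟩ := Nat.exists_eq_add_of_le' hN
      rw [card_withMultGe_add_two hm, card_withMultGe_add_two hm, ih]
      simp only [add_one_mul (k + 1) m, Nat.add_le_add_iff_right, Nat.add_sub_add_right]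

lemma sum_mult_eq_sum_card_withMultGe {m N K : ℕ} (hK : ∀ P ∈ overpartitions N, mult m P ≤ K) :
    ∑ P ∈ overpartitions N, mult m P = ∑ k ∈ range K, #(withMultGe m (k + 1) N) := by
  simp only [withMultGe, card_filter]
  rw [sum_comm]
  refine sum_congr rfl fun P hP => ?_
  have hrange : (range K).filter (fun k => k + 1 ≤ mult m P) = range (mult m P) := by
    ext k
    have := hK P hP
    simp only [mem_filter, mem_range]
    omega
  rw [sum_boole, hrange, card_range, Nat.cast_id]

lemma overlineF1_eq_sum_mult (n : ℕ) : overlineF1 n = ∑ P ∈ overpartitions n, mult 1 P := by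
  rw [overlineF1, ← coe_overpartitions, finsum_mem_coe_finset]
  rfl

lemma overlineG_eq_sum_card_withMultGe {k : ℕ} (hk : 0 < k) (n : ℕ) :
    overlineG k n = ∑ m ∈ Icc 1 n, #(withMultGe m k n) := by
  rw [overlineG, ← coe_overpartitions, finsum_mem_coe_finset]
  calc ∑ P ∈ overpartitions n, #((P.1.toFinset ∪ P.2).filter fun m => k ≤ mult m P)
      = ∑ P ∈ overpartitions n, #((Icc 1 n).filter fun m => k ≤ mult m P) := by
        refine sum_congr rfl fun P hP => congrArg card ?_
        ext m
        simp only [mem_filter, mem_union, Multiset.mem_toFinset]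
        have h := one_le_mult_iff (m := m) (P := P)
        have h' := mem_Icc_of_one_le_mult (m := m) (mem_overpartitions.mp hP)
        exact ⟨fun ⟨_, hkm⟩ => ⟨h' (by omega), hkm⟩, fun ⟨_, hkm⟩ => ⟨h.mp (by omega), hkm⟩⟩
    _ = ∑ m ∈ Icc 1 n, #(withMultGe m k n) := by
        simp only [withMultGe, card_filter]
        exact sum_comm

end Overpartition

open Overpartition

theorem overlineF1_eq_overlineG_sub_general (n : ℕ) :
    (overlineF1 n : ℤ) = (overlineG 1 n : ℤ) - (overlineG 3 n : ℤ) := by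
  set φ : ℕ → ℤ := fun j => ((if j ≤ n then 2 * #(overpartitions (n - j)) else 0 : ℕ) : ℤ)
    with hφ
  have hpair (m k : ℕ) (hm : 0 < m) :
      (#(withMultGe m (k + 1) n) + #(withMultGe m (k + 2) n) : ℤ) = φ ((k + 1) * m) := by
    simp only [hφ]
    rw [← card_withMultGe_succ_add_succ_succ hm k n, Nat.cast_add]
  have hF : (overlineF1 n : ℤ) = ∑ i ∈ range n, φ (2 * i + 1) := by
    have hK : ∀ P ∈ overpartitions n, mult 1 P ≤ 2 * n := fun P hP => by
      have := mult_mul_le (m := 1) (mem_overpartitions.mp hP)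
      omega
    rw [overlineF1_eq_sum_mult, sum_mult_eq_sum_card_withMultGe hK, sum_range_two_mul]
    push_cast
    exact sum_congr rfl fun i _ => by simpa using hpair 1 (2 * i) one_pos
  have hG : (overlineG 1 n - overlineG 3 n : ℤ) = ∑ m ∈ Icc 1 n, (φ m - φ (2 * m)) := by
    rw [overlineG_eq_sum_card_withMultGe one_pos, overlineG_eq_sum_card_withMultGe three_pos]
    push_cast
    rw [← sum_sub_distrib]
    refine sum_congr rfl fun m hm => ?_
    have h₁ := hpair m 0 (mem_Icc.mp hm).1
    have h₂ := hpair m 1 (mem_Icc.mp hm).1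
    simp only [zero_add, one_mul] at h₁ h₂
    linear_combination h₁ - h₂
  have hvanish : ∀ j, n < j → φ j = 0 := fun j hj => by
    simp only [hφ]
    rw [if_neg (by omega), Nat.cast_zero]
  rw [hF, hG, sum_Icc_sub_two_mul hvanish]

/-- Stanley's theorem for overpartitions: `F̄₁(n) = Ḡ₁(n) - Ḡ₃(n)`. -/
theorem overlineF1_eq_overlineG_sub (n : ℕ) (hn : 0 < n) :
    (overlineF1 n : ℤ) = (overlineG 1 n : ℤ) - (overlineG 3 n : ℤ) :=
  overlineF1_eq_overlineG_sub_general n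
end
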